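/- Let S be a Boolean inverse ∧-monoid. (1) If a, b ∈ S satisfy \overline{φ(a)}·\overline{φ(b)} = 0 then ab = ba. (2) If g and h are units with σ(g)·σ(h) = 0 then g and h commute. (3) For any units g and h, σ(ghg⁻¹) = g·σ(h)·g⁻¹. -/

import Mathlib

universe u

/-- An inverse monoid with zero: every element `a` has a unique generalized
inverse `a⁻¹`, and `0` is an absorbing element. -/
class InverseMonoidWithZero (S : Type u) extends Monoid S, Zero S, Inv S where
  zero_mul' : ∀ a : S, 0 * a = 0
  mul_zero' : ∀ a : S, a * 0 = 0
  mul_inv_mul : ∀ a : S, a * a⁻¹ * a = a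
  inv_mul_inv : ∀ a : S, a⁻¹ * a * a⁻¹ = a⁻¹
  inv_unique : ∀ a b : S, a * b * a = a → b * a * b = b → b = a⁻¹

section BasicDefs

variable {S : Type u}

/-- The natural partial order: `a ≤ b` iff `a = e * b` for some idempotent `e`. -/
def nle [InverseMonoidWithZero S] (a b : S) : Prop :=
  ∃ e : S, e * e = e ∧ a = e * b

/-- `a` and `b` are compatible if `a * b⁻¹` and `a⁻¹ * b` are idempotents. -/
def Compat [InverseMonoidWithZero S] (a b : S) : Prop :=
  (a * b⁻¹) * (a * b⁻¹) = a * b⁻¹ ∧ (a⁻¹ * b) * (a⁻¹ * b) = a⁻¹ * b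

/-- `a` and `b` are orthogonal if `a * b⁻¹ = 0` and `a⁻¹ * b = 0`. -/
def Orth [InverseMonoidWithZero S] (a b : S) : Prop :=
  a * b⁻¹ = 0 ∧ a⁻¹ * b = 0

end BasicDefs

/-- A distributive inverse monoid: every compatible pair has a join (for the
natural partial order), recorded by `sup`, and multiplication distributes over
these binary joins. -/
class DistributiveInverseMonoid (S : Type u) extends InverseMonoidWithZero S where
  sup : S → S → S
  le_sup_left : ∀ a b : S, Compat a b → nle a (sup a b)
  le_sup_right : ∀ a b : S, Compat a b → nle b (sup a b)
  sup_le : ∀ a b c : S, Compat a b → nle a c → nle b c → nle (sup a b) c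
  mul_sup : ∀ a b c : S, Compat a b → c * sup a b = sup (c * a) (c * b)
  sup_mul : ∀ a b c : S, Compat a b → sup a b * c = sup (a * c) (b * c)

/-- A Boolean inverse monoid: a distributive inverse monoid whose idempotents
form a Boolean algebra under the natural partial order; `compl` records the
complementation on idempotents. -/
class BooleanInverseMonoid (S : Type u) extends DistributiveInverseMonoid S where
  compl : S → S
  compl_idem : ∀ e : S, e * e = e → compl e * compl e = compl e
  mul_compl : ∀ e : S, e * e = e → e * compl e = 0
  sup_compl : ∀ e : S, e * e = e → sup e (compl e) = 1

/-- A Boolean inverse ∧-monoid: a Boolean inverse monoid in which every pair of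
elements has a meet with respect to the natural partial order. -/
class BooleanInverseMeetMonoid (S : Type u) extends BooleanInverseMonoid S where
  inf : S → S → S
  inf_le_left : ∀ a b : S, nle (inf a b) a
  inf_le_right : ∀ a b : S, nle (inf a b) b
  le_inf : ∀ a b c : S, nle c a → nle c b → nle c (inf a b)

section MoreDefs

variable {S : Type u}

/-- The join of a compatible pair. -/
def bsup [DistributiveInverseMonoid S] (a b : S) : S := DistributiveInverseMonoid.sup a b

/-- Complementation in the Boolean algebra of idempotents. -/
def bcompl [BooleanInverseMonoid S] (e : S) : S := BooleanInverseMonoid.compl e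

/-- The binary meet. -/
def binf [BooleanInverseMeetMonoid S] (a b : S) : S := BooleanInverseMeetMonoid.inf a b

/-- The fixed-point operator `φ(s) = s ∧ 1`. -/
def phi [BooleanInverseMeetMonoid S] (s : S) : S := binf s 1

/-- The support operator `σ(s) = \overline{φ(s)} ⋅ s⁻¹ s`. -/
def sigma [BooleanInverseMeetMonoid S] (s : S) : S := bcompl (phi s) * (s⁻¹ * s)

/-- An infinitesimal is a non-zero element that squares to zero. -/
def Infinitesimal [InverseMonoidWithZero S] (a : S) : Prop := a ≠ 0 ∧ a * a = 0

/-- A (two-sided) ideal. -/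
def IsMIdeal [InverseMonoidWithZero S] (I : Set S) : Prop :=
  I.Nonempty ∧ ∀ a ∈ I, ∀ s : S, s * a ∈ I ∧ a * s ∈ I

/-- A ∨-ideal: an ideal closed under joins of compatible pairs. -/
def IsVIdeal [DistributiveInverseMonoid S] (I : Set S) : Prop :=
  IsMIdeal I ∧ ∀ a ∈ I, ∀ b ∈ I, Compat a b → bsup a b ∈ I

end MoreDefs

/-- 0-simplifying: the only ∨-ideals are `{0}` and `S`. -/
def ZeroSimplifying (S : Type u) [DistributiveInverseMonoid S] : Prop :=
  ∀ I : Set S, IsVIdeal I → I = {0} ∨ I = Set.univ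

/-- 0-simple: non-trivial and the only ideals are `{0}` and `S`. -/
def ZeroSimple (S : Type u) [InverseMonoidWithZero S] : Prop :=
  (∃ s : S, s ≠ 0) ∧ ∀ I : Set S, IsMIdeal I → I = {0} ∨ I = Set.univ

/-- Fundamental: every element commuting with all idempotents is an idempotent. -/
def Fundamental (S : Type u) [InverseMonoidWithZero S] : Prop :=
  ∀ a : S, (∀ e : S, e * e = e → a * e = e * a) → a * a = a

/-- The Boolean algebra of idempotents is atomless. -/
def IdemAtomless (S : Type u) [InverseMonoidWithZero S] : Prop :=
  ∀ e : S, e * e = e → e ≠ 0 → ∃ f : S, f * f = f ∧ f ≠ 0 ∧ nle f e ∧ f ≠ e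

section Filters

variable {S : Type u}

/-- A filter in a Boolean inverse ∧-monoid: a nonempty subset closed under
binary meets and upward closed in the natural partial order. -/
def IsMFilter [BooleanInverseMeetMonoid S] (A : Set S) : Prop :=
  A.Nonempty ∧ (∀ a ∈ A, ∀ b ∈ A, binf a b ∈ A) ∧ ∀ a ∈ A, ∀ b : S, nle a b → b ∈ A

/-- An ultrafilter: a maximal proper filter. -/
def IsMUltrafilter [BooleanInverseMeetMonoid S] (A : Set S) : Prop :=
  IsMFilter A ∧ (0 : S) ∉ A ∧ ∀ B : Set S, IsMFilter B → (0 : S) ∉ B → A ⊆ B → A = B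

/-- A filter of the Boolean algebra of idempotents (meet of idempotents is
their product). -/
def IsIdemFilter [InverseMonoidWithZero S] (F : Set S) : Prop :=
  F.Nonempty ∧ (∀ e ∈ F, e * e = e) ∧ (∀ e ∈ F, ∀ f ∈ F, e * f ∈ F) ∧
    ∀ e ∈ F, ∀ f : S, f * f = f → nle e f → f ∈ F

/-- An ultrafilter of the Boolean algebra of idempotents. -/
def IsIdemUltrafilter [InverseMonoidWithZero S] (F : Set S) : Prop :=
  IsIdemFilter F ∧ (0 : S) ∉ F ∧
    ∀ G : Set S, IsIdemFilter G → (0 : S) ∉ G → F ⊆ G → F = G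

end Filters

section PencilDefs

variable {S : Type u}

/-- `Preceq e f`: there is a pencil from `e` to `f`, i.e. finitely many
elements `x₁, …, xₘ` with `r(xᵢ) ≤ f` for all `i` and `e = ⋁ d(xᵢ)`
(a least upper bound for the natural partial order). -/
def Preceq [DistributiveInverseMonoid S] (e f : S) : Prop :=
  ∃ l : List S, l ≠ [] ∧ (∀ x ∈ l, nle (x * x⁻¹) f) ∧
    (∀ x ∈ l, nle (x⁻¹ * x) e) ∧ ∀ c : S, (∀ x ∈ l, nle (x⁻¹ * x) c) → nle e c

/-- Piecewise factorizable: every element is a finite join of elements each of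
which lies beneath a unit. -/
def PiecewiseFactorizable (S : Type u) [DistributiveInverseMonoid S] : Prop :=
  ∀ s : S, ∃ l : List S, l ≠ [] ∧ (∀ x ∈ l, ∃ g : S, IsUnit g ∧ nle x g) ∧
    (∀ x ∈ l, nle x s) ∧ ∀ c : S, (∀ x ∈ l, nle x c) → nle s c

/-- A properly infinite idempotent. -/
def ProperlyInfinite [DistributiveInverseMonoid S] (e : S) : Prop :=
  ∃ x y : S, x⁻¹ * x = e ∧ y⁻¹ * y = e ∧ Orth (x * x⁻¹) (y * y⁻¹) ∧
    nle (bsup (x * x⁻¹) (y * y⁻¹)) e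

end PencilDefs

/-- Purely infinite: every non-zero idempotent is properly infinite. -/
def PurelyInfinite (S : Type u) [DistributiveInverseMonoid S] : Prop :=
  ∀ e : S, e * e = e → e ≠ 0 → ProperlyInfinite e

/-!
For (1), put `p = φ(b)` and `f = \overline{p}`. The hypothesis says `f ≤ φ(a)`, so
`a f = f = f a`. An element commuting with an idempotent commutes with its complement; hence `a`
commutes with `p = \overline{f}`, and `b`, which commutes with `φ(b)`, commutes with `f`. As
`x = x p ∨ x f` for every `x`, comparing `a b` and `b a` after right multiplication by `p` and by
`f` gives `a b = b a`. For a unit `g` we have `σ(g) = \overline{φ(g)}`, so (2) is a case of (1).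
For (3): an isomorphism of Boolean inverse ∧-monoids preserves inverses, the natural order, meets
and complements of idempotents, hence `φ` and `σ`; conjugation by a unit is such an isomorphism.
-/

namespace InverseMonoidWithZero

variable {S : Type u} [InverseMonoidWithZero S]

scoped instance : MonoidWithZero S where
  zero_mul := zero_mul'
  mul_zero := mul_zero'

theorem inv_eq_of_mul_mul {a b : S} (h₁ : a * b * a = a) (h₂ : b * a * b = b) : a⁻¹ = b :=
  (inv_unique a b h₁ h₂).symm

theorem isIdempotentElem_mul_inv (a : S) : IsIdempotentElem (a * a⁻¹) := by
  rw [IsIdempotentElem, ← mul_assoc, mul_inv_mul]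

theorem isIdempotentElem_inv_mul (a : S) : IsIdempotentElem (a⁻¹ * a) := by
  rw [IsIdempotentElem, ← mul_assoc, inv_mul_inv]

theorem inv_inv_self (a : S) : a⁻¹⁻¹ = a :=
  inv_eq_of_mul_mul (inv_mul_inv a) (mul_inv_mul a)

theorem _root_.IsIdempotentElem.inv_eq {e : S} (he : IsIdempotentElem e) : e⁻¹ = e :=
  inv_eq_of_mul_mul (by rw [he.eq, he.eq]) (by rw [he.eq, he.eq])

theorem isIdempotentElem_mul {e f : S} (he : IsIdempotentElem e) (hf : IsIdempotentElem f) :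
    IsIdempotentElem (e * f) := by
  set x := (e * f)⁻¹ with hx
  have hA : e * f * x * e * f = e * f := by
    simpa only [← mul_assoc] using mul_inv_mul (e * f)
  have hB : x * e * f * x = x := by
    simpa only [← mul_assoc] using inv_mul_inv (e * f)
  -- `f * x * e` is a second inverse of `e * f`, so `x` is idempotent, and then so is `x⁻¹ = e * f`
  have hfxe : x = f * x * e := by
    refine inv_eq_of_mul_mul ?_ ?_
    · simpa only [← mul_assoc, he.mul_mul_self, hf.mul_mul_self] using hA
    · calc f * x * e * (e * f) * (f * x * e) = f * (x * e * f * x) * e := by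
            simp only [← mul_assoc, he.mul_mul_self, hf.mul_mul_self]
        _ = f * x * e := by rw [hB]
  have hx_idem : IsIdempotentElem x := by
    calc x * x = f * x * e * (f * x * e) := by rw [← hfxe]
      _ = f * (x * e * f * x) * e := by simp only [← mul_assoc]
      _ = x := by rw [hB, ← hfxe]
  rw [← inv_inv_self (e * f), ← hx, hx_idem.inv_eq]
  exact hx_idem

theorem commute_of_isIdempotentElem {e f : S} (he : IsIdempotentElem e)
    (hf : IsIdempotentElem f) : Commute e f := by
  have hfe : (e * f)⁻¹ = f * e := by
    refine inv_eq_of_mul_mul ?_ ?_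
    · simpa only [← mul_assoc, he.mul_mul_self, hf.mul_mul_self] using
        (isIdempotentElem_mul he hf).eq
    · simpa only [← mul_assoc, he.mul_mul_self, hf.mul_mul_self] using
        (isIdempotentElem_mul hf he).eq
  rw [Commute, SemiconjBy, ← hfe, (isIdempotentElem_mul he hf).inv_eq]

theorem mul_inv_rev_self (a b : S) : (a * b)⁻¹ = b⁻¹ * a⁻¹ := by
  have hc :=
    commute_of_isIdempotentElem (isIdempotentElem_mul_inv b) (isIdempotentElem_inv_mul a)
  refine inv_eq_of_mul_mul ?_ ?_
  · calc a * b * (b⁻¹ * a⁻¹) * (a * b) = a * (b * b⁻¹ * (a⁻¹ * a)) * b := by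
          simp only [mul_assoc]
      _ = a * a⁻¹ * a * (b * b⁻¹ * b) := by rw [hc.eq]; simp only [mul_assoc]
      _ = a * b := by rw [mul_inv_mul, mul_inv_mul]
  · calc b⁻¹ * a⁻¹ * (a * b) * (b⁻¹ * a⁻¹) = b⁻¹ * (a⁻¹ * a * (b * b⁻¹)) * a⁻¹ := by
          simp only [mul_assoc]
      _ = b⁻¹ * b * b⁻¹ * (a⁻¹ * a * a⁻¹) := by rw [← hc.eq]; simp only [mul_assoc]
      _ = b⁻¹ * a⁻¹ := by rw [inv_mul_inv, inv_mul_inv]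

scoped instance : DivisionMonoid S where
  inv_inv := inv_inv_self
  mul_inv_rev := mul_inv_rev_self
  inv_eq_of_mul a b h := inv_eq_of_mul_mul (by rw [h, one_mul]) (by rw [mul_assoc, h, mul_one])

theorem map_inv {T F : Type*} [InverseMonoidWithZero T] [FunLike F S T] [MulHomClass F S T]
    (f : F) (a : S) : f a⁻¹ = (f a)⁻¹ :=
  (inv_eq_of_mul_mul (by rw [← map_mul, ← map_mul, mul_inv_mul])
    (by rw [← map_mul, ← map_mul, inv_mul_inv])).symm

end InverseMonoidWithZero

section

open InverseMonoidWithZero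

def unitConj {M : Type*} [Monoid M] (u : Mˣ) : M ≃* M where
  toFun x := u * x * ↑u⁻¹
  invFun x := ↑u⁻¹ * x * u
  left_inv x := by simp [mul_assoc]
  right_inv x := by simp [mul_assoc]
  map_mul' x y := by simp [mul_assoc]

section NaturalOrder

variable {S : Type u} [InverseMonoidWithZero S] {a b : S}

theorem nle_refl (a : S) : nle a a :=
  ⟨a * a⁻¹, isIdempotentElem_mul_inv a, (mul_inv_mul a).symm⟩

theorem zero_nle (a : S) : nle 0 a := ⟨0, IsIdempotentElem.zero, (zero_mul a).symm⟩

theorem nle.eq_range_mul (h : nle a b) : a = a * a⁻¹ * b := by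
  obtain ⟨e, he : IsIdempotentElem e, rfl⟩ := h
  calc e * b = e * e * (b * b⁻¹ * b) := by rw [he.eq, mul_inv_mul]
    _ = e * (e * (b * b⁻¹)) * b := by simp only [mul_assoc]
    _ = e * b * (e * b)⁻¹ * b := by
      rw [← (commute_of_isIdempotentElem (isIdempotentElem_mul_inv b) he).eq, mul_inv_rev,
        he.inv_eq]
      simp only [mul_assoc]

theorem nle.eq_mul_domain (h : nle a b) : a = b * (a⁻¹ * a) := by
  obtain ⟨e, he : IsIdempotentElem e, rfl⟩ := h
  calc e * b = e * (b * b⁻¹ * b) := by rw [mul_inv_mul]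
    _ = b * b⁻¹ * e * b := by
      rw [(commute_of_isIdempotentElem (isIdempotentElem_mul_inv b) he).eq]; simp only [mul_assoc]
    _ = b * ((e * b)⁻¹ * (e * b)) := by
      rw [mul_inv_rev, he.inv_eq]; simp only [← mul_assoc, he.mul_mul_self]

theorem nle_antisymm (h₁ : nle a b) (h₂ : nle b a) : a = b :=
  calc a = a * a⁻¹ * (b * b⁻¹ * a) := by rw [← h₂.eq_range_mul, ← h₁.eq_range_mul]
    _ = b * b⁻¹ * (a * a⁻¹ * a) := by
      rw [← mul_assoc, (commute_of_isIdempotentElem (isIdempotentElem_mul_inv a)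
        (isIdempotentElem_mul_inv b)).eq, mul_assoc]
    _ = b := by rw [mul_inv_mul, ← h₂.eq_range_mul]

theorem nle.map {T F : Type*} [InverseMonoidWithZero T] [FunLike F S T] [MulHomClass F S T]
    (f : F) (h : nle a b) : nle (f a) (f b) := by
  obtain ⟨e, he : IsIdempotentElem e, rfl⟩ := h
  exact ⟨f e, he.map f, map_mul f e b⟩

end NaturalOrder

section Boolean

variable {S : Type u} [BooleanInverseMonoid S] {e x y : S}

theorem compat_of_isIdempotentElem {f : S} (he : IsIdempotentElem e) (hf : IsIdempotentElem f) :
    Compat e f :=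
  ⟨by rw [hf.inv_eq]; exact isIdempotentElem_mul he hf,
    by rw [he.inv_eq]; exact isIdempotentElem_mul he hf⟩

theorem bsup_zero (a : S) : bsup a 0 = a := by
  have h : Compat a 0 := ⟨by simp [IsIdempotentElem.zero.inv_eq], by simp⟩
  exact nle_antisymm (DistributiveInverseMonoid.sup_le _ _ _ h (nle_refl a) (zero_nle a))
    (DistributiveInverseMonoid.le_sup_left _ _ h)

theorem zero_bsup (a : S) : bsup 0 a = a := by
  have h : Compat 0 a := ⟨by simp, by simp [IsIdempotentElem.zero.inv_eq]⟩
  exact nle_antisymm (DistributiveInverseMonoid.sup_le _ _ _ h (zero_nle a) (nle_refl a))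
    (DistributiveInverseMonoid.le_sup_right _ _ h)

theorem isIdempotentElem_bcompl (he : IsIdempotentElem e) : IsIdempotentElem (bcompl e) :=
  BooleanInverseMonoid.compl_idem e he

theorem mul_bcompl_self (he : IsIdempotentElem e) : e * bcompl e = 0 :=
  BooleanInverseMonoid.mul_compl e he

theorem bcompl_mul_self (he : IsIdempotentElem e) : bcompl e * e = 0 := by
  rw [← (commute_of_isIdempotentElem he (isIdempotentElem_bcompl he)).eq, mul_bcompl_self he]

theorem bsup_mul_mul_bcompl (he : IsIdempotentElem e) (x : S) :
    bsup (x * e) (x * bcompl e) = x := by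
  rw [bsup, ← DistributiveInverseMonoid.mul_sup _ _ _
    (compat_of_isIdempotentElem he (isIdempotentElem_bcompl he))]
  exact (congrArg (x * ·) (BooleanInverseMonoid.sup_compl e he)).trans (mul_one x)

theorem bsup_mul_bcompl_mul (he : IsIdempotentElem e) (x : S) :
    bsup (e * x) (bcompl e * x) = x := by
  rw [bsup, ← DistributiveInverseMonoid.sup_mul _ _ _
    (compat_of_isIdempotentElem he (isIdempotentElem_bcompl he))]
  exact (congrArg (· * x) (BooleanInverseMonoid.sup_compl e he)).trans (one_mul x)

theorem mul_bcompl_of_mul_eq_zero (he : IsIdempotentElem e) (h : x * e = 0) :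
    x * bcompl e = x := by
  rw [← zero_bsup (x * bcompl e), ← h, bsup_mul_mul_bcompl he]

theorem mul_of_mul_bcompl_eq_zero (he : IsIdempotentElem e) (h : x * bcompl e = 0) :
    x * e = x := by
  rw [← bsup_zero (x * e), ← h, bsup_mul_mul_bcompl he]

theorem bcompl_mul_of_mul_eq_zero (he : IsIdempotentElem e) (h : e * x = 0) :
    bcompl e * x = x := by
  rw [← zero_bsup (bcompl e * x), ← h, bsup_mul_bcompl_mul he]

theorem eq_of_mul_eq_of_mul_bcompl_eq (he : IsIdempotentElem e) (h₁ : x * e = y * e)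
    (h₂ : x * bcompl e = y * bcompl e) : x = y := by
  rw [← bsup_mul_mul_bcompl he x, h₁, h₂, bsup_mul_mul_bcompl he y]

theorem bcompl_bcompl (he : IsIdempotentElem e) : bcompl (bcompl e) = e :=
  calc bcompl (bcompl e) = bcompl (bcompl e) * e :=
        (mul_of_mul_bcompl_eq_zero he (bcompl_mul_self (isIdempotentElem_bcompl he))).symm
    _ = e * bcompl (bcompl e) := (commute_of_isIdempotentElem he
        (isIdempotentElem_bcompl (isIdempotentElem_bcompl he))).eq.symm
    _ = e := mul_bcompl_of_mul_eq_zero (isIdempotentElem_bcompl he) (mul_bcompl_self he)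

theorem Commute.bcompl_right (he : IsIdempotentElem e) (h : Commute x e) :
    Commute x (bcompl e) := by
  have h₁ : e * (x * bcompl e) = 0 := by
    rw [← mul_assoc, ← h.eq, mul_assoc, mul_bcompl_self he, mul_zero]
  have h₂ : bcompl e * x * e = 0 := by
    rw [mul_assoc, h.eq, ← mul_assoc, bcompl_mul_self he, zero_mul]
  calc x * bcompl e = bcompl e * x * bcompl e := by
        rw [mul_assoc, bcompl_mul_of_mul_eq_zero he h₁]
    _ = bcompl e * x := mul_bcompl_of_mul_eq_zero he h₂

theorem bcompl_map {T : Type*} [BooleanInverseMonoid T] (ψ : S ≃* T)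
    (he : IsIdempotentElem e) : bcompl (ψ e) = ψ (bcompl e) := by
  have hE := he.map ψ
  have h₁ : ψ (bcompl e) * bcompl (ψ e) = ψ (bcompl e) :=
    mul_bcompl_of_mul_eq_zero hE (by rw [← map_mul, bcompl_mul_self he, map_zero])
  have h₂ : ψ.symm (bcompl (ψ e)) * bcompl e = ψ.symm (bcompl (ψ e)) :=
    mul_bcompl_of_mul_eq_zero he (ψ.injective (by
      rw [map_mul, ψ.apply_symm_apply, bcompl_mul_self hE, map_zero]))
  calc bcompl (ψ e) = bcompl (ψ e) * ψ (bcompl e) := by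
        simpa using (congrArg ψ h₂).symm
    _ = ψ (bcompl e) * bcompl (ψ e) :=
        (commute_of_isIdempotentElem (isIdempotentElem_bcompl hE)
          ((isIdempotentElem_bcompl he).map ψ)).eq
    _ = ψ (bcompl e) := h₁

end Boolean

section Support

variable {S : Type u} [BooleanInverseMeetMonoid S]

theorem phi_nle (s : S) : nle (phi s) s := BooleanInverseMeetMonoid.inf_le_left s 1

theorem phi_nle_one (s : S) : nle (phi s) 1 := BooleanInverseMeetMonoid.inf_le_right s 1

theorem isIdempotentElem_phi (s : S) : IsIdempotentElem (phi s) := by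
  obtain ⟨e, he, h⟩ := phi_nle_one s
  rw [mul_one] at h
  rw [h]
  exact he

theorem phi_mul_self (s : S) : phi s * s = phi s := by
  conv_rhs => rw [(phi_nle s).eq_range_mul, (isIdempotentElem_phi s).inv_eq,
    isIdempotentElem_phi s]

theorem mul_phi_self (s : S) : s * phi s = phi s := by
  conv_rhs => rw [(phi_nle s).eq_mul_domain, (isIdempotentElem_phi s).inv_eq,
    isIdempotentElem_phi s]

theorem commute_phi (s : S) : Commute s (phi s) := (mul_phi_self s).trans (phi_mul_self s).symm

theorem map_phi_nle_phi_map {T : Type*} [BooleanInverseMeetMonoid T] (ψ : S ≃* T) (s : S) :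
    nle (ψ (phi s)) (phi (ψ s)) :=
  BooleanInverseMeetMonoid.le_inf _ _ _ ((phi_nle s).map ψ)
    (by simpa using (phi_nle_one s).map ψ)

theorem phi_map {T : Type*} [BooleanInverseMeetMonoid T] (ψ : S ≃* T) (s : S) :
    phi (ψ s) = ψ (phi s) :=
  nle_antisymm (by simpa using (map_phi_nle_phi_map ψ.symm (ψ s)).map ψ)
    (map_phi_nle_phi_map ψ s)

theorem sigma_map {T : Type*} [BooleanInverseMeetMonoid T] (ψ : S ≃* T) (s : S) :
    sigma (ψ s) = ψ (sigma s) := by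
  rw [sigma, sigma, phi_map, bcompl_map ψ (isIdempotentElem_phi s), map_mul, map_mul,
    InverseMonoidWithZero.map_inv]

theorem sigma_of_isUnit {g : S} (hg : IsUnit g) : sigma g = bcompl (phi g) := by
  rw [sigma, hg.inv_mul_cancel, mul_one]

theorem commute_of_bcompl_phi_mul_bcompl_phi_eq_zero {a b : S}
    (h : bcompl (phi a) * bcompl (phi b) = 0) : Commute a b := by
  set f := bcompl (phi b)
  have hpa := isIdempotentElem_phi a
  have hpb := isIdempotentElem_phi b
  have hf : IsIdempotentElem f := isIdempotentElem_bcompl hpb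
  have hfpa : f * phi a = f := mul_of_mul_bcompl_eq_zero hpa
    (by rw [← (commute_of_isIdempotentElem (isIdempotentElem_bcompl hpa) hf).eq, h])
  have haf : a * f = f := by
    rw [← hfpa, (commute_of_isIdempotentElem hf hpa).eq, ← mul_assoc, mul_phi_self]
  have hfa : f * a = f := by rw [← hfpa, mul_assoc, phi_mul_self]
  have ha_pb : Commute a (phi b) := by
    simpa only [f, bcompl_bcompl hpb] using Commute.bcompl_right hf (haf.trans hfa.symm)
  have hb_f : Commute b f := (commute_phi b).bcompl_right hpb
  refine eq_of_mul_eq_of_mul_bcompl_eq hpb ?_ ?_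
  · rw [mul_assoc, mul_phi_self, mul_assoc, ha_pb.eq, ← mul_assoc, mul_phi_self]
  · rw [mul_assoc, hb_f.eq, ← mul_assoc, haf, mul_assoc, haf, hb_f.eq]

theorem sigma_conj_of_isUnit {g : S} (hg : IsUnit g) (h : S) :
    sigma (g * h * g⁻¹) = g * sigma h * g⁻¹ := by
  obtain ⟨u, rfl⟩ := hg
  rw [← Units.val_inv_eq_inv_val]
  exact sigma_map (unitConj u) h

theorem commute_of_sigma_mul_sigma_eq_zero {g h : S} (hg : IsUnit g) (hh : IsUnit h)
    (hgh : sigma g * sigma h = 0) : Commute g h := by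
  rw [sigma_of_isUnit hg, sigma_of_isUnit hh] at hgh
  exact commute_of_bcompl_phi_mul_bcompl_phi_eq_zero hgh

end Support

end

/-- In a Boolean inverse ∧-monoid:
(1) if `\overline{φ(a)} ⋅ \overline{φ(b)} = 0` then `ab = ba`;
(2) if `g, h` are units with `σ(g)σ(h) = 0` then `g` and `h` commute;
(3) for units `g, h`, `σ(ghg⁻¹) = g σ(h) g⁻¹`. -/
theorem statement14 (S : Type u) [BooleanInverseMeetMonoid S] :
    (∀ a b : S, bcompl (phi a) * bcompl (phi b) = 0 → a * b = b * a) ∧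
    (∀ g h : S, IsUnit g → IsUnit h → sigma g * sigma h = 0 → g * h = h * g) ∧
    (∀ g h : S, IsUnit g → IsUnit h → sigma (g * h * g⁻¹) = g * sigma h * g⁻¹) :=
  ⟨fun _ _ => commute_of_bcompl_phi_mul_bcompl_phi_eq_zero,
    fun _ _ hg hh => commute_of_sigma_mul_sigma_eq_zero hg hh,
    fun _ h hg _ => sigma_conj_of_isUnit hg h⟩
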